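/- In a Choice gadget consisting of a linear sequence of n AUT gates, if the player opens exactly the first k−1 gates (1 ≤ k ≤ n) and the k-th gate is closed, then an object traversing the sequence from the first gate exits at the side exit of gate k; moreover after the traversal all of the first k−1 gates are closed again, so without further open actions a second traversal exits at the side exit of gate 1. -/

import Mathlib

/-- State of a Choice gadget of `n` AUT gates in sequence: `v i = true` iff
gate `A_{i+1}` is open.  An object entering at the first gate moves forward
through open gates (closing each one it traverses) and is deflected out of
the side exit (`T_R`) of the first closed gate, which it leaves unchanged.
`choiceExit v` is the (0-indexed) gate at whose side exit the object
leaves, or `none` if all gates are open and the object passes all the way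
through. -/
def choiceExit {n : ℕ} (v : Fin n → Bool) : Option (Fin n) :=
  (List.finRange n).find? (fun i => v i = false)

/-- The state of the gates after one traversal: every (open) gate strictly
before the exiting gate has been traversed and is now closed; the exiting
gate and all later gates are unchanged (if all gates were open, all are
now closed). -/
def choiceAfter {n : ℕ} (v : Fin n → Bool) : Fin n → Bool :=
  fun j =>
    match choiceExit v with
    | none => false
    | some i => if j < i then false else v j

lemma choiceExit_aux {n : ℕ} (v : Fin n → Bool) (m : Fin n)
    (h1 : v m = false) (h2 : ∀ j : Fin n, j < m → v j = true) :
    choiceExit v = some m := by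
  unfold choiceExit
  rw [show (List.finRange n) = List.ofFn id from by
    simp [List.finRange, List.ofFn_id]]
  exact (List.find?_ofFn_eq_some_of_injective (f := id) (i := m)
    (fun a b h => h)).mpr ⟨by simp [h1], fun j hj => by simp [h2 j hj]⟩

/-- If the player opens exactly the first `k − 1` gates (`1 ≤ k ≤ n`) and
the `k`-th gate is closed, then a traversing object exits at the side exit
of gate `k`; moreover after the traversal all of the first `k − 1` gates
are closed again, so — with no further open actions — a second traversal
exits at the side exit of gate `1`. -/
theorem stmt_15 (n k : ℕ) (hk1 : 1 ≤ k) (hkn : k ≤ n)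
    (v : Fin n → Bool) (hv : ∀ i : Fin n, v i = true ↔ (i : ℕ) < k - 1) :
    choiceExit v = some ⟨k - 1, lt_of_lt_of_le (Nat.sub_lt hk1 one_pos) hkn⟩ ∧
    (∀ j : Fin n, (j : ℕ) < k - 1 → choiceAfter v j = false) ∧
    choiceExit (choiceAfter v) = some ⟨0, lt_of_lt_of_le hk1 hkn⟩ := by
  haveI : NeZero n := ⟨by omega⟩
  set m : Fin n := ⟨k - 1, lt_of_lt_of_le (Nat.sub_lt hk1 one_pos) hkn⟩ with hm
  have h1 : v m = false := by
    rw [← Bool.not_eq_true, hv]; simp; show k ≤ k - 1 + 1; omega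
  have h2 : ∀ j : Fin n, j < m → v j = true := fun j hj => (hv j).mpr hj
  have hexit : choiceExit v = some m := choiceExit_aux v m h1 h2
  have hafter : ∀ j : Fin n, choiceAfter v j = if j < m then false else v j := by
    intro j; unfold choiceAfter; rw [hexit]
  refine ⟨hexit, fun j hj => by rw [hafter]; simp [show j < m from hj], ?_⟩
  apply choiceExit_aux
  · rw [hafter]
    by_cases h : (⟨0, lt_of_lt_of_le hk1 hkn⟩ : Fin n) < m
    · have h' : (0 : Fin n) < m := lt_of_le_of_lt (le_of_eq (Fin.ext (by simp))) h
      simp [h']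
    · have : m = ⟨0, lt_of_lt_of_le hk1 hkn⟩ := le_antisymm (not_lt.mp h) (Fin.zero_le m)
      have h0 : (⟨0, lt_of_lt_of_le hk1 hkn⟩ : Fin n) = 0 := Fin.ext (by simp)
      have h1' : v 0 = false := h0 ▸ this ▸ h1
      simp [this, h0, h1']
  · intro j hj
    exact absurd (Fin.zero_le j) (not_le.mpr hj)
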